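/- If at each time step the cost-to-go J_{t+1} is piecewise quadratic (a pointwise minimum of finitely many quadratic forms xᵀPx + q) and the architecture set 𝒮 is finite with each architecture S giving linear dynamics x⁺ = Ax + B_S u and quadratic stage cost xᵀQx + uᵀRu with R ≻ 0, then the Bellman backup J_t(x) = min over S ∈ 𝒮 and piece (P,q) of min_u [xᵀQx + uᵀRu + (Ax + B_S u)ᵀP(Ax + B_S u) + q] is again a pointwise minimum of finitely many quadratic forms, hence piecewise quadratic. -/

import Mathlib

/-!
For a fixed architecture `S` and piece `(P, q)`, the cost is a quadratic in the input `u` with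
Hessian `R + B_Sᵀ P B_S`, which is positive definite because `R ≻ 0` and `P ⪰ 0`. Completing the
square gives its minimum in closed form: one Riccati step applied to `P`, evaluated at `x`, plus
`q`. The backup is the minimum of these finitely many quadratic forms over the pairs `(S, (P, q))`.
-/

open Matrix

namespace Matrix

variable {m n : Type*} [Fintype m] [Fintype n]

lemma dotProduct_transpose_mul_mul_mulVec {l : Type*} [Fintype l] {R : Type*} [CommSemiring R]
    (C : Matrix m n R) (M : Matrix m m R) (D : Matrix m l R) (v : n → R) (w : l → R) :
    v ⬝ᵥ (Cᵀ * M * D) *ᵥ w = C *ᵥ v ⬝ᵥ M *ᵥ (D *ᵥ w) := by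
  rw [← mulVec_mulVec, ← mulVec_mulVec, dotProduct_mulVec, vecMul_transpose]

lemma IsSymm.dotProduct_mulVec_comm {R : Type*} [CommSemiring R] {M : Matrix n n R}
    (hM : M.IsSymm) (v w : n → R) : v ⬝ᵥ M *ᵥ w = w ⬝ᵥ M *ᵥ v := by
  conv_lhs => rw [← hM.eq]
  rw [dotProduct_mulVec, vecMul_transpose, dotProduct_comm]

lemma IsSymm.dotProduct_mulVec_add_inv_mulVec {R : Type*} [CommRing R] [DecidableEq n]
    {M : Matrix n n R} (hM : M.IsSymm) (hdet : IsUnit M.det) (u b : n → R) :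
    (u + M⁻¹ *ᵥ b) ⬝ᵥ M *ᵥ (u + M⁻¹ *ᵥ b) = u ⬝ᵥ M *ᵥ u + 2 * (u ⬝ᵥ b) + b ⬝ᵥ M⁻¹ *ᵥ b := by
  have hMb : M *ᵥ (M⁻¹ *ᵥ b) = b := by rw [mulVec_mulVec, mul_nonsing_inv _ hdet, one_mulVec]
  rw [mulVec_add, hMb, add_dotProduct, dotProduct_add, dotProduct_add,
    hM.dotProduct_mulVec_comm (M⁻¹ *ᵥ b) u, hMb, dotProduct_comm (M⁻¹ *ᵥ b) b]
  ring

section Ordered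

variable {𝕜 : Type*} [Field 𝕜] [LinearOrder 𝕜] [IsStrictOrderedRing 𝕜] [StarRing 𝕜]
  [TrivialStar 𝕜] [DecidableEq n]

lemma PosDef.isLeast_range_quadratic {M : Matrix n n 𝕜} (hM : M.PosDef) (b : n → 𝕜) (c : 𝕜) :
    IsLeast (Set.range fun u => u ⬝ᵥ M *ᵥ u + 2 * (u ⬝ᵥ b) + c) (c - b ⬝ᵥ M⁻¹ *ᵥ b) := by
  have hsymm : M.IsSymm := isHermitian_iff_isSymm.1 hM.isHermitian
  have hdet : IsUnit M.det := (isUnit_iff_isUnit_det M).1 hM.isUnit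
  have hsquare (u : n → 𝕜) : u ⬝ᵥ M *ᵥ u + 2 * (u ⬝ᵥ b) + c
      = (u + M⁻¹ *ᵥ b) ⬝ᵥ M *ᵥ (u + M⁻¹ *ᵥ b) + (c - b ⬝ᵥ M⁻¹ *ᵥ b) := by
    rw [hsymm.dotProduct_mulVec_add_inv_mulVec hdet]
    ring
  refine ⟨⟨-(M⁻¹ *ᵥ b), ?_⟩, ?_⟩
  · simp only [hsquare, neg_add_cancel, zero_dotProduct, zero_add]
  · rintro _ ⟨u, rfl⟩
    have := hM.posSemidef.dotProduct_mulVec_nonneg (u + M⁻¹ *ᵥ b)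
    simp only [star_trivial] at this
    simp only [hsquare]
    linarith

end Ordered

section LinearQuadratic

variable {𝕜 : Type*} [CommRing 𝕜]

noncomputable def riccatiStep [DecidableEq m] (A : Matrix n n 𝕜) (B : Matrix n m 𝕜)
    (Q : Matrix n n 𝕜) (R : Matrix m m 𝕜) (P : Matrix n n 𝕜) : Matrix n n 𝕜 :=
  Q + Aᵀ * P * A - (Bᵀ * P * A)ᵀ * (R + Bᵀ * P * B)⁻¹ * (Bᵀ * P * A)

lemma lqCost_eq_quadratic {A Q P : Matrix n n 𝕜} {B : Matrix n m 𝕜} {R : Matrix m m 𝕜}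
    (hP : P.IsSymm) (x : n → 𝕜) (u : m → 𝕜) (c : 𝕜) :
    x ⬝ᵥ Q *ᵥ x + u ⬝ᵥ R *ᵥ u + (A *ᵥ x + B *ᵥ u) ⬝ᵥ P *ᵥ (A *ᵥ x + B *ᵥ u) + c
      = u ⬝ᵥ (R + Bᵀ * P * B) *ᵥ u + 2 * (u ⬝ᵥ (Bᵀ * P * A) *ᵥ x)
          + (x ⬝ᵥ (Q + Aᵀ * P * A) *ᵥ x + c) := by
  simp only [add_mulVec, mulVec_add, dotProduct_add, add_dotProduct,
    dotProduct_transpose_mul_mul_mulVec, hP.dotProduct_mulVec_comm (A *ᵥ x) (B *ᵥ u)]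
  ring

end LinearQuadratic

lemma iInf_lqCost_eq_riccatiStep [DecidableEq m] {A Q P : Matrix n n ℝ} {B : Matrix n m ℝ}
    {R : Matrix m m ℝ} (hR : R.PosDef) (hP : P.PosSemidef) (x : n → ℝ) (c : ℝ) :
    ⨅ u : m → ℝ, (x ⬝ᵥ Q *ᵥ x + u ⬝ᵥ R *ᵥ u + (A *ᵥ x + B *ᵥ u) ⬝ᵥ P *ᵥ (A *ᵥ x + B *ᵥ u) + c)
      = x ⬝ᵥ riccatiStep A B Q R P *ᵥ x + c := by
  have hPsymm : P.IsSymm := isHermitian_iff_isSymm.1 hP.isHermitian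
  have hM : (R + Bᵀ * P * B).PosDef := by
    simpa only [conjTranspose_eq_transpose_of_trivial] using
      hR.add_posSemidef (hP.conjTranspose_mul_mul_same B)
  simp only [lqCost_eq_quadratic hPsymm]
  rw [(hM.isLeast_range_quadratic _ _).isGLB.ciInf_eq, riccatiStep, sub_mulVec, dotProduct_sub,
    dotProduct_transpose_mul_mul_mulVec]
  ring

end Matrix

theorem bellman_backup_piecewise_quadratic_general {n k : ℕ}
    {σ ι : Type*} [Fintype σ] [Nonempty σ] [Fintype ι] [Nonempty ι]
    (A : Matrix (Fin n) (Fin n) ℝ) (Q : Matrix (Fin n) (Fin n) ℝ)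
    (R : Matrix (Fin k) (Fin k) ℝ)
    (B : σ → Matrix (Fin n) (Fin k) ℝ)
    (P : ι → Matrix (Fin n) (Fin n) ℝ) (q : ι → ℝ)
    (hR : R.PosDef) (hP : ∀ i, (P i).PosSemidef) :
    ∃ (m : ℕ) (P' : Fin (m + 1) → Matrix (Fin n) (Fin n) ℝ) (q' : Fin (m + 1) → ℝ),
      ∀ x : Fin n → ℝ,
        (⨅ p : σ × ι, ⨅ u : Fin k → ℝ,
            (x ⬝ᵥ Q.mulVec x + u ⬝ᵥ R.mulVec u +
              (A.mulVec x + (B p.1).mulVec u) ⬝ᵥ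
                (P p.2).mulVec (A.mulVec x + (B p.1).mulVec u) + q p.2))
          = ⨅ j, x ⬝ᵥ (P' j).mulVec x + q' j := by
  obtain ⟨m, hm⟩ : ∃ m, Fintype.card (σ × ι) = m + 1 :=
    Nat.exists_eq_add_one.2 Fintype.card_pos
  let e : Fin (m + 1) ≃ σ × ι := (Fintype.equivFinOfCardEq hm).symm
  refine ⟨m, fun j => riccatiStep A (B (e j).1) Q R (P (e j).2), fun j => q (e j).2, fun x => ?_⟩
  rw [← e.iInf_comp]
  exact iInf_congr fun j => iInf_lqCost_eq_riccatiStep hR (hP _) x _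

/-- If `J_{t+1}` is a pointwise minimum of finitely many quadratics and each architecture
gives linear dynamics with quadratic cost, the Bellman backup is again a pointwise
minimum of finitely many quadratics, hence piecewise quadratic. -/
theorem bellman_backup_piecewise_quadratic {n k : ℕ}
    {σ ι : Type*} [Fintype σ] [Nonempty σ] [Fintype ι] [Nonempty ι]
    (A : Matrix (Fin n) (Fin n) ℝ) (Q : Matrix (Fin n) (Fin n) ℝ)
    (R : Matrix (Fin k) (Fin k) ℝ)
    (B : σ → Matrix (Fin n) (Fin k) ℝ)
    (P : ι → Matrix (Fin n) (Fin n) ℝ) (q : ι → ℝ)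
    (hQ : Q.PosSemidef) (hR : R.PosDef) (hP : ∀ i, (P i).PosSemidef) :
    ∃ (m : ℕ) (P' : Fin (m + 1) → Matrix (Fin n) (Fin n) ℝ) (q' : Fin (m + 1) → ℝ),
      ∀ x : Fin n → ℝ,
        (⨅ p : σ × ι, ⨅ u : Fin k → ℝ,
            (x ⬝ᵥ Q.mulVec x + u ⬝ᵥ R.mulVec u +
              (A.mulVec x + (B p.1).mulVec u) ⬝ᵥ
                (P p.2).mulVec (A.mulVec x + (B p.1).mulVec u) + q p.2))
          = ⨅ j, x ⬝ᵥ (P' j).mulVec x + q' j :=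
  bellman_backup_piecewise_quadratic_general A Q R B P q hR hP
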